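/- arXiv:2402.15484 — 4 statements merged into one kernel-verified Lean document; each statement's English description precedes it below -/
import Mathlib

section
/- Let D' ⊆ D be finite sets of reals, with elements of D' listed in increasing order d₁ < d₂ < ⋯ < d_m. Suppose an interval [d_i, d_{i+1}) (with consecutive endpoints in D') contains at most 49K² elements of D' + (D - D). Then d_{i+1} - d_i < δ, where δ is the (49K² + 1)-th smallest positive element of D - D (assuming D - D has at least 49K² + 1 positive elements). -/
open scoped Pointwise Classical

/-- Squeezing: let `D' ⊆ D` be finite sets of reals and let `[dᵢ, dⱼ)` be an interval whose
endpoints are consecutive elements of `D'`.  If this interval contains at most `49K²` elements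
of `D' + (D - D)`, then `dⱼ - dᵢ < δ`, where `δ` is the `(49K² + 1)`-th smallest positive
element of `D - D` (i.e. `δ` is a positive element of `D - D` with at least `49K²` positive
elements of `D - D` below it). -/
theorem consecutive_gap_lt_small_difference (D D' : Finset ℝ) (hsub : D' ⊆ D) (K : ℝ)
    (di dj : ℝ) (hdi : di ∈ D') (hdj : dj ∈ D') (hlt : di < dj)
    (hconsec : ∀ c ∈ D', ¬ (di < c ∧ c < dj))
    (hcount : ((((D' + (D - D))).filter (fun y => di ≤ y ∧ y < dj)).card : ℝ) ≤ 49 * K ^ 2)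
    (δ : ℝ) (hδ : δ ∈ (D - D).filter (fun y => 0 < y))
    (hrank : 49 * K ^ 2 ≤ ((((D - D).filter (fun y => 0 < y ∧ y < δ)).card : ℝ))) :
    dj - di < δ := by
  by_contra h
  push_neg at h
  simp only [Finset.mem_filter] at hδ
  set S : Finset ℝ := (D - D).filter (fun y => 0 < y ∧ y < δ) with hS
  have h0 : (0 : ℝ) ∉ S := by
    simp [hS]
  have hSsub : (insert (0:ℝ) S).image (fun t => di + t) ⊆
      (D' + (D - D)).filter (fun y => di ≤ y ∧ y < dj) := by
    intro x hx
    simp only [Finset.mem_image, Finset.mem_insert] at hx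
    obtain ⟨t, ht, rfl⟩ := hx
    have htD : t ∈ D - D := by
      rcases ht with rfl | ht
      · have : di - di ∈ D - D := Finset.sub_mem_sub (hsub hdi) (hsub hdi)
        simpa using this
      · exact (Finset.mem_filter.mp ht).1
    have ht0 : 0 ≤ t ∧ t < δ := by
      rcases ht with rfl | ht
      · exact ⟨le_refl 0, hδ.2⟩
      · obtain ⟨_, h1, h2⟩ := Finset.mem_filter.mp ht
        exact ⟨h1.le, h2⟩
    refine Finset.mem_filter.mpr
      ⟨Finset.add_mem_add hdi htD, by linarith [ht0.1], by linarith [ht0.2, h]⟩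
  have hinj : Set.InjOn (fun t => di + t) ((insert (0:ℝ) S : Finset ℝ) : Set ℝ) := by
    intro a _ b _ hab
    simpa using hab
  have hcard : S.card + 1 ≤ ((D' + (D - D)).filter (fun y => di ≤ y ∧ y < dj)).card := by
    calc S.card + 1 = (insert (0:ℝ) S).card := (Finset.card_insert_of_notMem h0).symm
    _ = ((insert (0:ℝ) S).image (fun t => di + t)).card :=
        (Finset.card_image_of_injOn hinj).symm
    _ ≤ _ := Finset.card_le_card hSsub
  have := Nat.cast_le (α := ℝ) |>.mpr hcard
  push_cast at this
  linarith
end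

section
/- Let P ⊆ R^n be a set of N points and Γ a finite set of curves such that no two distinct curves intersect in more than 2 points. Let Γ_k be the set of curves in Γ containing at least k points of P. If k ≥ 4N^{1/2}, then |Γ_k| < 2N/k. -/
open scoped Classical

/-- Bonferroni-type lower bound: if each of the sets `A a`, `a ∈ T`, has at least `k`
elements and pairwise intersections have at most `2` elements, then
`|T| * k ≤ |⋃ A| + 2 * C(|T|, 2)`. -/
lemma rich_curves_aux {α β : Type*} [DecidableEq α] [DecidableEq β] (k : ℕ) (A : α → Finset β) :
    ∀ T : Finset α, (∀ a ∈ T, k ≤ (A a).card) →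
      (∀ a ∈ T, ∀ b ∈ T, a ≠ b → (A a ∩ A b).card ≤ 2) →
      T.card * k ≤ (T.biUnion A).card + 2 * (T.card.choose 2) := by
  intro T
  induction T using Finset.induction_on with
  | empty => simp
  | @insert a T ha ih =>
    intro hk hint
    have h1 : k ≤ (A a).card := hk a (Finset.mem_insert_self a T)
    have h2 := ih (fun b hb => hk b (Finset.mem_insert_of_mem hb))
      (fun b hb c hc hbc => hint b (Finset.mem_insert_of_mem hb) c (Finset.mem_insert_of_mem hc) hbc)
    have h3 : ((A a) ∪ T.biUnion A).card + ((A a) ∩ T.biUnion A).card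
        = (A a).card + (T.biUnion A).card := Finset.card_union_add_card_inter _ _
    have h4 : ((A a) ∩ T.biUnion A).card ≤ 2 * T.card := by
      rw [Finset.inter_biUnion]
      refine le_trans (Finset.card_biUnion_le) ?_
      have : ∑ b ∈ T, (A a ∩ A b).card ≤ T.card • 2 := by
        refine Finset.sum_le_card_nsmul _ _ _ ?_
        intro b hb
        exact hint a (Finset.mem_insert_self a T) b (Finset.mem_insert_of_mem hb)
          (fun h => ha (h ▸ hb))
      simpa [smul_eq_mul, mul_comm] using this
    have h5 : (T.card + 1).choose 2 = T.card + T.card.choose 2 := by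
      have := Nat.choose_succ_succ T.card 1
      simpa [Nat.choose_one_right] using this
    rw [Finset.card_insert_of_notMem ha, Finset.biUnion_insert, h5]
    calc (T.card + 1) * k = T.card * k + k := by ring
      _ ≤ ((T.biUnion A).card + 2 * T.card.choose 2) + (A a).card := by omega
      _ = ((A a).card + (T.biUnion A).card) + 2 * T.card.choose 2 := by ring
      _ = (((A a) ∪ T.biUnion A).card + ((A a) ∩ T.biUnion A).card) + 2 * T.card.choose 2 := by
          rw [h3]
      _ ≤ ((A a) ∪ T.biUnion A).card + 2 * (T.card + T.card.choose 2) := by omega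

/-- Rich curves bound: let `P ⊆ ℝⁿ` be a set of `N ≥ 1` points and `Γ` a finite set of curves
such that no two distinct curves intersect in more than `2` points.  If `Γ_k` is the set of
curves of `Γ` containing at least `k` points of `P`, and `k ≥ 4√N`, then `|Γ_k| < 2N/k`. -/
theorem rich_curves_bound {n : ℕ} (P : Finset (EuclideanSpace ℝ (Fin n)))
    (Γ : Finset (Set (EuclideanSpace ℝ (Fin n)))) (N k : ℕ)
    (hN : P.card = N) (hN0 : 0 < N)
    (hC : ∀ γ ∈ Γ, ∀ γ' ∈ Γ, γ ≠ γ' → (γ ∩ γ').Finite ∧ (γ ∩ γ').ncard ≤ 2)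
    (hk : (4 : ℝ) * Real.sqrt N ≤ k) :
    ((Γ.filter (fun γ => k ≤ (P.filter (fun p => p ∈ γ)).card)).card : ℝ) <
      2 * N / k := by
  by_contra hcon
  push_neg at hcon
  set A : Set (EuclideanSpace ℝ (Fin n)) → Finset (EuclideanSpace ℝ (Fin n)) :=
    fun γ => P.filter (fun p => p ∈ γ) with hA
  set S := Γ.filter (fun γ => k ≤ (A γ).card) with hSdef
  -- basic positivity facts
  have hs1 : (1 : ℝ) ≤ Real.sqrt N := by
    rw [Real.one_le_sqrt]
    exact_mod_cast hN0
  have hss : Real.sqrt N * Real.sqrt N = (N : ℝ) := Real.mul_self_sqrt (by positivity)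
  have hk4 : (4 : ℝ) ≤ (k : ℝ) := by nlinarith
  have hkpos : 0 < k := by exact_mod_cast lt_of_lt_of_le (by norm_num : (0:ℝ) < 4) hk4
  have hkR : (0 : ℝ) < (k : ℝ) := by exact_mod_cast hkpos
  -- from the contradiction hypothesis: 2N ≤ |S| * k in ℕ
  have hmk : 2 * N ≤ S.card * k := by
    have h' : (2 * N : ℝ) ≤ (S.card : ℝ) * k := by
      rw [div_le_iff₀ hkR] at hcon
      calc (2 * N : ℝ) = 2 * (N : ℝ) := by push_cast; ring
        _ ≤ (S.card : ℝ) * k := hcon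
    exact_mod_cast h'
  -- choose t
  set t := min S.card (2 * N / k + 1) with htdef
  have ht_le : t ≤ S.card := min_le_left _ _
  obtain ⟨T, hTS, hTcard⟩ := Finset.exists_subset_card_eq ht_le
  have htk : 2 * N ≤ t * k := by
    rcases le_total S.card (2 * N / k + 1) with h | h
    · rw [htdef, min_eq_left h]; exact hmk
    · rw [htdef, min_eq_right h]
      have h1 := Nat.div_add_mod (2 * N) k
      have h2 : (2 * N) % k < k := Nat.mod_lt _ hkpos
      have h3 : (2 * N / k + 1) * k = k * (2 * N / k) + k := by ring
      linarith
  have ht1 : 1 ≤ t := by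
    rcases Nat.eq_zero_or_pos t with h | h
    · exfalso; rw [h] at htk; simp at htk; omega
    · exact h
  -- curves in T are rich and pairwise intersect in ≤ 2 points of P
  have hrich : ∀ γ ∈ T, k ≤ (A γ).card := by
    intro γ hγ
    exact (Finset.mem_filter.mp (hTS hγ)).2
  have hint : ∀ γ ∈ T, ∀ γ' ∈ T, γ ≠ γ' → (A γ ∩ A γ').card ≤ 2 := by
    intro γ hγ γ' hγ' hne
    have hγΓ : γ ∈ Γ := (Finset.mem_filter.mp (hTS hγ)).1
    have hγ'Γ : γ' ∈ Γ := (Finset.mem_filter.mp (hTS hγ')).1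
    obtain ⟨hfin, hle⟩ := hC γ hγΓ γ' hγ'Γ hne
    have hsub : ((A γ ∩ A γ' : Finset _) : Set (EuclideanSpace ℝ (Fin n))) ⊆ γ ∩ γ' := by
      intro p hp
      simp only [hA, Finset.coe_inter, Set.mem_inter_iff, Finset.mem_coe,
        Finset.mem_filter] at hp
      exact ⟨hp.1.2, hp.2.2⟩
    calc (A γ ∩ A γ').card = ((A γ ∩ A γ' : Finset _) : Set (EuclideanSpace ℝ (Fin n))).ncard :=
          (Set.ncard_coe_finset _).symm
      _ ≤ (γ ∩ γ').ncard := Set.ncard_le_ncard hsub hfin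
      _ ≤ 2 := hle
  -- main counting inequality
  have hmain := rich_curves_aux k A T hrich hint
  rw [hTcard] at hmain
  have hsubP : T.biUnion A ⊆ P := by
    intro p hp
    obtain ⟨γ, _, hpγ⟩ := Finset.mem_biUnion.mp hp
    exact (Finset.mem_filter.mp hpγ).1
  have hNbound : (T.biUnion A).card ≤ N := hN ▸ Finset.card_le_card hsubP
  -- 2 * choose t 2 = t * (t - 1)
  have hchoose : 2 * t.choose 2 = t * (t - 1) := by
    rw [Nat.choose_two_right]
    have heven : 2 ∣ t * (t - 1) := Nat.even_mul_pred_self t |>.two_dvd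
    omega
  have hNt : N ≤ t * (t - 1) := by
    have : 2 * N ≤ N + t * (t - 1) := by
      calc 2 * N ≤ t * k := htk
        _ ≤ (T.biUnion A).card + 2 * t.choose 2 := hmain
        _ ≤ N + t * (t - 1) := by rw [hchoose]; omega
    omega
  -- pass to the reals and derive a contradiction
  have htR : (t : ℝ) ≤ Real.sqrt N / 2 + 1 := by
    have h1 : (t : ℝ) ≤ ((2 * N / k : ℕ) : ℝ) + 1 := by
      have : t ≤ 2 * N / k + 1 := min_le_right _ _
      exact_mod_cast this
    have h2 : ((2 * N / k : ℕ) : ℝ) ≤ (2 * N : ℕ) / (k : ℝ) := Nat.cast_div_le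
    have h3 : ((2 * N : ℕ) : ℝ) / (k : ℝ) ≤ Real.sqrt N / 2 := by
      rw [div_le_div_iff₀ hkR (by norm_num)]
      push_cast
      nlinarith
    push_cast at h1 h2 h3 ⊢
    linarith
  have htm1 : ((t - 1 : ℕ) : ℝ) ≤ Real.sqrt N / 2 := by
    have : ((t - 1 : ℕ) : ℝ) = (t : ℝ) - 1 := by
      have : (1 : ℕ) ≤ t := ht1
      push_cast [Nat.cast_sub this]
      ring
    rw [this]; linarith
  have hNtR : (N : ℝ) ≤ (t : ℝ) * ((t - 1 : ℕ) : ℝ) := by exact_mod_cast hNt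
  have htpos : (0 : ℝ) ≤ ((t - 1 : ℕ) : ℝ) := Nat.cast_nonneg _
  have htpos' : (0 : ℝ) ≤ (t : ℝ) := Nat.cast_nonneg _
  nlinarith [mul_le_mul htR htm1 htpos (by linarith : (0:ℝ) ≤ Real.sqrt N / 2 + 1)]
end

section
/- Fix x ≥ 0 with x ≠ 0 and x ≠ 1, and let β(t) = arctan(sin t / (cos t - x)) be the slope angle of the line joining (cos t, sin t) to (x, 0), and α(t) = arctan((sin t - sin a)/(cos t - cos a)) the chord slope angle as before. Viewing α as a function of β via t, one has dα/dβ = 1 + (x² - 1)/(2(1 - x·cos t)), wherever defined. -/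
/-- With `β(t) = arctan(sin t/(cos t - x))` the slope angle of the line joining
`(cos t, sin t)` to `(x,0)` and `α(t) = arctan((sin t - sin a)/(cos t - cos a))` the chord
slope angle, for `t ∈ (0, π/2)`, `x ≥ 0`, `x ≠ 0`, `x ≠ 1`, wherever defined one has
`dα/dβ = dα/dt / (dβ/dt) = 1 + (x² - 1)/(2(1 - x·cos t))`. -/
theorem chord_angle_deriv_wrt_slope_angle (a x t : ℝ)
    (hx0 : 0 ≤ x) (hx : x ≠ 0) (hx1 : x ≠ 1)
    (ht : t ∈ Set.Ioo (0 : ℝ) (Real.pi / 2))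
    (ha : Real.cos t ≠ Real.cos a) (hcx : Real.cos t ≠ x)
    (hden : 1 - x * Real.cos t ≠ 0) :
    deriv (fun u => Real.arctan ((Real.sin u - Real.sin a) / (Real.cos u - Real.cos a))) t /
      deriv (fun u => Real.arctan (Real.sin u / (Real.cos u - x))) t =
      1 + (x ^ 2 - 1) / (2 * (1 - x * Real.cos t)) := by
  have hg : Real.cos t - Real.cos a ≠ 0 := sub_ne_zero.mpr ha
  have hgx : Real.cos t - x ≠ 0 := sub_ne_zero.mpr hcx
  have hst : Real.sin t ^ 2 + Real.cos t ^ 2 = 1 := Real.sin_sq_add_cos_sq t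
  have hsa : Real.sin a ^ 2 + Real.cos a ^ 2 = 1 := Real.sin_sq_add_cos_sq a
  have hA : HasDerivAt
      (fun u => Real.arctan ((Real.sin u - Real.sin a) / (Real.cos u - Real.cos a)))
      (1 / (1 + ((Real.sin t - Real.sin a) / (Real.cos t - Real.cos a)) ^ 2) *
        ((Real.cos t * (Real.cos t - Real.cos a) -
          (Real.sin t - Real.sin a) * (-Real.sin t)) / (Real.cos t - Real.cos a) ^ 2)) t :=
    ((((Real.hasDerivAt_sin t).sub_const _).div
      ((Real.hasDerivAt_cos t).sub_const _) hg)).arctan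
  have hB : HasDerivAt (fun u => Real.arctan (Real.sin u / (Real.cos u - x)))
      (1 / (1 + (Real.sin t / (Real.cos t - x)) ^ 2) *
        ((Real.cos t * (Real.cos t - x) - Real.sin t * (-Real.sin t)) / (Real.cos t - x) ^ 2)) t :=
    (((Real.hasDerivAt_sin t).div
      ((Real.hasDerivAt_cos t).sub_const x) hgx)).arctan
  have hposA : (1 : ℝ) + ((Real.sin t - Real.sin a) / (Real.cos t - Real.cos a)) ^ 2 ≠ 0 := by
    positivity
  have hposB : (1 : ℝ) + (Real.sin t / (Real.cos t - x)) ^ 2 ≠ 0 := by positivity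
  have hs : 0 < Real.sin t :=
    Real.sin_pos_of_pos_of_lt_pi ht.1 (ht.2.trans (half_lt_self Real.pi_pos))
  have hqpos : 0 < x ^ 2 - 2 * x * Real.cos t + 1 := by
    nlinarith [sq_nonneg (x - Real.cos t), mul_pos hs hs]
  have hq : x ^ 2 - 2 * x * Real.cos t + 1 ≠ 0 := ne_of_gt hqpos
  have eA : deriv (fun u => Real.arctan ((Real.sin u - Real.sin a) /
      (Real.cos u - Real.cos a))) t = 1 / 2 := by
    rw [hA.deriv]
    field_simp
    nlinarith [hst, hsa]
  have eB : deriv (fun u => Real.arctan (Real.sin u / (Real.cos u - x))) t =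
      (1 - x * Real.cos t) / (x ^ 2 - 2 * x * Real.cos t + 1) := by
    rw [hB.deriv]
    rw [eq_div_iff hq]
    field_simp
    linear_combination (x * (x - Real.cos t)) * hst
  rw [eA, eB]
  field_simp
  ring
end

section
/- Let p, q, s, t ∈ R^2 satisfy p₂ - q₂ = s₂ - t₂, p₁ + q₁ = s₁ + t₁, p ∧ q = s ∧ t, and p·q = s·t, with (s,t) ≠ (p,q). Then, writing m = p + q, m' = s + t, l = p - q, l' = s - t, one has m₂ = -m'₂ and l₁ = -l'₁; that is, the segments pq and ts are reflections of one another across the x₁-axis. -/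
set_option maxHeartbeats 800000

/-- If `p, q, s, t ∈ ℝ²` satisfy `p₂ - q₂ = s₂ - t₂`, `p₁ + q₁ = s₁ + t₁`, `p ∧ q = s ∧ t`
and `p·q = s·t` with `(s,t) ≠ (p,q)`, then with `m = p + q`, `m' = s + t`, `l = p - q`,
`l' = s - t` one has `m₂ = -m'₂` and `l₁ = -l'₁`: the segments `pq` and `ts` are reflections
of one another across the `x₁`-axis. -/
theorem segments_symmetric_across_axis (p q s t : ℝ × ℝ)
    (h1 : p.2 - q.2 = s.2 - t.2)
    (h2 : p.1 + q.1 = s.1 + t.1)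
    (h3 : p.1 * q.2 - p.2 * q.1 = s.1 * t.2 - s.2 * t.1)
    (h4 : p.1 * q.1 + p.2 * q.2 = s.1 * t.1 + s.2 * t.2)
    (hne : (s, t) ≠ (p, q)) :
    p.2 + q.2 = -(s.2 + t.2) ∧ p.1 - q.1 = -(s.1 - t.1) := by
  obtain ⟨p1, p2⟩ := p
  obtain ⟨q1, q2⟩ := q
  obtain ⟨s1, s2⟩ := s
  obtain ⟨t1, t2⟩ := t
  simp only at *
  have A : (p1 - q1) * (p2 + q2) = (s1 - t1) * (s2 + t2) := by
    linear_combination 2 * h3 + (p1 + q1) * h1 + (s2 - t2) * h2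
  have B : (p2 + q2) ^ 2 - (p1 - q1) ^ 2 = (s2 + t2) ^ 2 - (s1 - t1) ^ 2 := by
    linear_combination 4 * h4 - (p1 + q1 + s1 + t1) * h2 + (p2 - q2 + s2 - t2) * h1
  have key : (((p2 + q2) + (s2 + t2)) ^ 2 + ((p1 - q1) + (s1 - t1)) ^ 2) *
      (((p2 + q2) - (s2 + t2)) ^ 2 + ((p1 - q1) - (s1 - t1)) ^ 2) = 0 := by
    linear_combination (((p2 + q2) ^ 2 - (p1 - q1) ^ 2) - ((s2 + t2) ^ 2 - (s1 - t1) ^ 2)) * B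
      + (4 * ((p1 - q1) * (p2 + q2) - (s1 - t1) * (s2 + t2))) * A
  rcases mul_eq_zero.mp key with h | h
  · have e1 : ((p2 + q2) + (s2 + t2)) ^ 2 = 0 := by
      linarith [sq_nonneg ((p1 - q1) + (s1 - t1)), sq_nonneg ((p2 + q2) + (s2 + t2))]
    have e2 : ((p1 - q1) + (s1 - t1)) ^ 2 = 0 := by
      linarith [sq_nonneg ((p1 - q1) + (s1 - t1)), sq_nonneg ((p2 + q2) + (s2 + t2))]
    have e1' := pow_eq_zero_iff (two_ne_zero) |>.mp e1
    have e2' := pow_eq_zero_iff (two_ne_zero) |>.mp e2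
    constructor <;> linarith
  · exfalso
    have e1 : ((p2 + q2) - (s2 + t2)) ^ 2 = 0 := by
      linarith [sq_nonneg ((p1 - q1) - (s1 - t1)), sq_nonneg ((p2 + q2) - (s2 + t2))]
    have e2 : ((p1 - q1) - (s1 - t1)) ^ 2 = 0 := by
      linarith [sq_nonneg ((p1 - q1) - (s1 - t1)), sq_nonneg ((p2 + q2) - (s2 + t2))]
    have e1' := pow_eq_zero_iff (two_ne_zero) |>.mp e1
    have e2' := pow_eq_zero_iff (two_ne_zero) |>.mp e2
    apply hne
    simp only [Prod.mk.injEq]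
    refine ⟨⟨?_, ?_⟩, ?_, ?_⟩ <;> linarith
end
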